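/- arXiv:1903.02813 — 2 statements merged into one kernel-verified Lean document; each statement's English description precedes it below -/
import Mathlib

section
/- Let p be a real pyramid, J = [a,b) a real interval, and D(p) the set of discontinuity points of p. Then p ≥ 1 on J and p − 1_J is a real pyramid if and only if exactly one of the following holds: (1) 0 < a, a ∉ D(p) and b ∈ D(p); (2) a ≤ 0 < b, a ∈ D(p) and b ∈ D(p); (3) b ≤ 0, a ∈ D(p) and b ∉ D(p). -/
/-!
A pyramid has left limits everywhere (it is monotone on each side of `0`), and its jump
`p x - p₋(x)` lies in `{0, 1}` for `x ≤ 0` and in `{-1, 0}` for `x > 0`; it vanishes exactly at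
the points of continuity. Subtracting `1_{[a,b)}` changes the jump only at the endpoints: by `-1`
at `a` and by `+1` at `b`. So if `p - 1_{[a,b)}` is a pyramid, `p` must jump up at `a` when
`a ≤ 0` and be continuous there when `0 < a`, and jump down at `b` when `0 < b` and be continuous
there when `b ≤ 0`. Conversely these jumps keep `p - 1_{[a,b)}` monotone on each side of `0`:
for `x < a ≤ y ≤ 0` the upward jump at `a` gives `p x ≤ p₋(a) < p a ≤ p y`, which pays for the
unit removed at `y`, and symmetrically at `b`.
-/

noncomputable section
open Function
open scoped Classical

/-- The `ℕ`-valued indicator function of the interval `[a, b)`. -/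
def ind (a b : ℝ) : ℝ → ℕ := (Set.Ico a b).indicator fun _ => 1

/-- A real pyramid: a function `p : ℝ → ℕ` vanishing outside a bounded set, maximal at `0`,
nondecreasing on `(-∞, 0]`, nonincreasing on `[0, ∞)`, right-continuous and piecewise
constant with finitely many discontinuities, and with jumps of size at most 1
(`p₋(x)` is the left limit of `p` at `x`). -/
def IsRealPyramid (p : ℝ → ℕ) : Prop :=
  (∃ M : ℝ, ∀ x : ℝ, M ≤ |x| → p x = 0) ∧
  (∀ x, p x ≤ p 0) ∧
  (∀ ⦃x y : ℝ⦄, x ≤ y → y ≤ 0 → p x ≤ p y) ∧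
  (∀ ⦃x y : ℝ⦄, 0 ≤ x → x ≤ y → p y ≤ p x) ∧
  (∀ x, ContinuousWithinAt p (Set.Ici x) x) ∧
  {x : ℝ | ¬ ContinuousAt p x}.Finite ∧
  (∀ x, |(p x : ℤ) - ((Function.leftLim p x : ℕ) : ℤ)| ≤ 1)

/-- The interval `[a, b)` is addable for `p` if `p + 1_{[a,b)}` is again a real pyramid. -/
def Addable (p : ℝ → ℕ) (a b : ℝ) : Prop := IsRealPyramid (fun x => p x + ind a b x)

/-- The interval `[a, b)` is removable for `p` if `p ≥ 1` on `[a, b)` and `p − 1_{[a,b)}`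
is again a real pyramid. -/
def Removable (p : ℝ → ℕ) (a b : ℝ) : Prop :=
  (∀ x ∈ Set.Ico a b, 1 ≤ p x) ∧ IsRealPyramid (fun x => p x - ind a b x)

/-- `n_J(p)`: `1` if `J = [a,b)` is addable for `p`, `−1` if removable, `0` otherwise. -/
def nJ (p : ℝ → ℕ) (a b : ℝ) : ℤ :=
  if Addable p a b then 1 else if Removable p a b then -1 else 0

open Filter Topology Set

lemma continuousAt_iff_leftLim_eq {α β : Type*} [LinearOrder α] [TopologicalSpace α]
    [OrderTopology α] [TopologicalSpace β] [T2Space β] {f : α → β} {x : α}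
    [(𝓝[<] x).NeBot]
    (hl : Tendsto f (𝓝[<] x) (𝓝 (leftLim f x))) (hr : ContinuousWithinAt f (Ici x) x) :
    ContinuousAt f x ↔ leftLim f x = f x := by
  rw [ContinuousAt, ← nhdsLT_sup_nhdsGE, tendsto_sup]
  exact ⟨fun h => tendsto_nhds_unique hl h.1, fun h => ⟨h ▸ hl, hr⟩⟩

def jump (f : ℝ → ℕ) (x : ℝ) : ℤ := f x - leftLim f x

section Indicator

variable {a b x : ℝ}

lemma ind_of_mem (h : x ∈ Ico a b) : ind a b x = 1 := indicator_of_mem h _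

lemma ind_of_notMem (h : x ∉ Ico a b) : ind a b x = 0 := indicator_of_notMem h _

lemma tendsto_ind_nhdsLT :
    Tendsto (ind a b) (𝓝[<] x) (𝓝 ((Ioc a b).indicator (fun _ => 1) x)) := by
  rw [nhds_discrete, tendsto_pure]
  by_cases hx : x ∈ Ioc a b
  · filter_upwards [Ioo_mem_nhdsLT hx.1] with y hy
    rw [ind_of_mem ⟨hy.1.le, hy.2.trans_le hx.2⟩, indicator_of_mem hx]
  rw [indicator_of_notMem hx]
  rcases le_or_gt x a with hxa | hax
  · filter_upwards [self_mem_nhdsWithin] with y hy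
    exact ind_of_notMem fun h => (h.1.trans_lt hy).not_ge hxa
  · filter_upwards [Ioo_mem_nhdsLT (not_le.1 fun h => hx ⟨hax, h⟩)] with y hy
    exact ind_of_notMem fun h => h.2.not_ge hy.1.le

lemma continuousWithinAt_ind : ContinuousWithinAt (ind a b) (Ici x) x := by
  rw [ContinuousWithinAt, nhds_discrete, tendsto_pure]
  by_cases hx : x ∈ Ico a b
  · filter_upwards [Ico_mem_nhdsGE hx.2] with y hy
    rw [ind_of_mem ⟨hx.1.trans hy.1, hy.2⟩, ind_of_mem hx]
  rw [ind_of_notMem hx]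
  rcases lt_or_ge x a with hxa | hax
  · filter_upwards [Ico_mem_nhdsGE hxa] with y hy
    exact ind_of_notMem fun h => h.1.not_gt hy.2
  · filter_upwards [self_mem_nhdsWithin] with y hy
    exact ind_of_notMem fun h => hx ⟨hax, hy.trans_lt h.2⟩

lemma continuousAt_ind (hab : a < b) (ha : x ≠ a) (hb : x ≠ b) : ContinuousAt (ind a b) x :=
  continuousOn_const.continuousAt_indicator (by simp [frontier_Ico hab, ha, hb])

lemma ind_le {p : ℝ → ℕ} (h1 : ∀ x ∈ Ico a b, 1 ≤ p x) (x : ℝ) :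
    ind a b x ≤ p x := by
  by_cases hx : x ∈ Ico a b
  · exact (ind_of_mem hx).trans_le (h1 x hx)
  · exact (ind_of_notMem hx).trans_le (Nat.zero_le _)

end Indicator

namespace IsRealPyramid

variable {p : ℝ → ℕ} {a b : ℝ}

lemma monotoneOn (hp : IsRealPyramid p) : MonotoneOn p (Iic 0) :=
  fun _ _ _ hy hxy => hp.2.2.1 hxy hy

lemma antitoneOn (hp : IsRealPyramid p) : AntitoneOn p (Ici 0) :=
  fun _ hx _ _ hxy => hp.2.2.2.1 hx hxy

lemma tendsto_leftLim (hp : IsRealPyramid p) (x : ℝ) :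
    Tendsto p (𝓝[<] x) (𝓝 (leftLim p x)) := by
  refine tendsto_leftLim_of_tendsto ?_
  rcases le_or_gt x 0 with hx | hx
  · exact ⟨_, (hp.monotoneOn.mono fun y hy => hy.2.le.trans hx).tendsto_nhdsWithin_Ioo_left
      (nonempty_Ioo.2 (sub_one_lt x)) ⟨p 0, forall_mem_image.2 fun y _ => hp.2.1 y⟩⟩
  · exact ⟨_, (hp.antitoneOn.mono fun y hy => hy.1.le).tendsto_nhdsWithin_Ioo_left
      (nonempty_Ioo.2 hx) (OrderBot.bddBelow _)⟩

lemma exists_eq_leftLim (hp : IsRealPyramid p) {x y : ℝ} (hyx : y < x) :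
    ∃ z ∈ Ioo y x, p z = leftLim p x := by
  have h := hp.tendsto_leftLim x
  rw [nhds_discrete, tendsto_pure] at h
  obtain ⟨z, hz, hpz⟩ := (h.and (Ioo_mem_nhdsLT hyx)).exists
  exact ⟨z, hpz, hz⟩

lemma le_leftLim_of_lt (hp : IsRealPyramid p) {x y : ℝ} (hyx : y < x) (hx : x ≤ 0) :
    p y ≤ leftLim p x := by
  obtain ⟨z, hz, hpz⟩ := hp.exists_eq_leftLim hyx
  exact hpz ▸ hp.monotoneOn (hz.1.le.trans (hz.2.le.trans hx)) (hz.2.le.trans hx) hz.1.le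

lemma leftLim_le_of_nonpos (hp : IsRealPyramid p) {x : ℝ} (hx : x ≤ 0) :
    leftLim p x ≤ p x := by
  obtain ⟨z, hz, hpz⟩ := hp.exists_eq_leftLim (sub_one_lt x)
  exact hpz ▸ hp.monotoneOn (hz.2.le.trans hx) hx hz.2.le

lemma leftLim_le_of_lt (hp : IsRealPyramid p) {x y : ℝ} (hy : 0 ≤ y) (hyx : y < x) :
    leftLim p x ≤ p y := by
  obtain ⟨z, hz, hpz⟩ := hp.exists_eq_leftLim hyx
  exact hpz ▸ hp.antitoneOn hy (hy.trans hz.1.le) hz.1.le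

lemma le_leftLim_of_pos (hp : IsRealPyramid p) {x : ℝ} (hx : 0 < x) : p x ≤ leftLim p x := by
  obtain ⟨z, hz, hpz⟩ := hp.exists_eq_leftLim hx
  exact hpz ▸ hp.antitoneOn hz.1.le (hz.1.trans hz.2).le hz.2.le

lemma continuousAt_iff_jump_eq_zero (hp : IsRealPyramid p) (x : ℝ) :
    ContinuousAt p x ↔ jump p x = 0 := by
  rw [continuousAt_iff_leftLim_eq (hp.tendsto_leftLim x) (hp.2.2.2.2.1 x), jump, sub_eq_zero]
  exact_mod_cast eq_comm

lemma abs_jump_le (hp : IsRealPyramid p) (x : ℝ) : |jump p x| ≤ 1 := hp.2.2.2.2.2.2 x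

lemma jump_nonneg_of_nonpos (hp : IsRealPyramid p) {x : ℝ} (hx : x ≤ 0) : 0 ≤ jump p x := by
  have := hp.leftLim_le_of_nonpos hx
  unfold jump
  omega

lemma jump_nonpos_of_pos (hp : IsRealPyramid p) {x : ℝ} (hx : 0 < x) : jump p x ≤ 0 := by
  have := hp.le_leftLim_of_pos hx
  unfold jump
  omega

lemma jump_eq_ite_nonpos_iff (hp : IsRealPyramid p) (x : ℝ) :
    jump p x = (if x ≤ 0 then 1 else 0) ↔ (¬ContinuousAt p x ↔ x ≤ 0) := by
  have := abs_le.1 (hp.abs_jump_le x)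
  rw [hp.continuousAt_iff_jump_eq_zero]
  split_ifs with hx
  · have := hp.jump_nonneg_of_nonpos hx
    simp only [hx, iff_true]
    omega
  · simp [hx]

lemma jump_eq_ite_pos_iff (hp : IsRealPyramid p) (x : ℝ) :
    jump p x = (if 0 < x then -1 else 0) ↔ (¬ContinuousAt p x ↔ 0 < x) := by
  have := abs_le.1 (hp.abs_jump_le x)
  rw [hp.continuousAt_iff_jump_eq_zero]
  split_ifs with hx
  · have := hp.jump_nonpos_of_pos hx
    simp only [hx, iff_true]
    omega
  · simp [hx]

lemma indicator_Ioc_le_leftLim (hp : IsRealPyramid p) (h1 : ∀ x ∈ Ico a b, 1 ≤ p x)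
    (x : ℝ) : (Ioc a b).indicator (fun _ => 1) x ≤ leftLim p x := by
  by_cases hx : x ∈ Ioc a b
  · obtain ⟨z, hz, hpz⟩ := hp.exists_eq_leftLim hx.1
    rw [indicator_of_mem hx, ← hpz]
    exact h1 z ⟨hz.1.le, hz.2.trans_le hx.2⟩
  · exact (indicator_of_notMem hx _).trans_le (Nat.zero_le _)

lemma leftLim_sub_ind (hp : IsRealPyramid p) (x : ℝ) :
    leftLim (fun y => p y - ind a b y) x = leftLim p x - (Ioc a b).indicator (fun _ => 1) x :=
  leftLim_eq_of_tendsto ((hp.tendsto_leftLim x).sub tendsto_ind_nhdsLT)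

lemma jump_sub_ind (hp : IsRealPyramid p) (h1 : ∀ x ∈ Ico a b, 1 ≤ p x) (x : ℝ) :
    jump (fun y => p y - ind a b y) x
      = jump p x - ind a b x + ((Ioc a b).indicator (fun _ => 1) x : ℕ) := by
  rw [jump, hp.leftLim_sub_ind, jump, Nat.cast_sub (ind_le h1 x),
    Nat.cast_sub (hp.indicator_Ioc_le_leftLim h1 x)]
  ring

lemma jump_sub_ind_left (hp : IsRealPyramid p) (hab : a < b)
    (h1 : ∀ x ∈ Ico a b, 1 ≤ p x) : jump (fun y => p y - ind a b y) a = jump p a - 1 := by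
  rw [hp.jump_sub_ind h1, ind_of_mem (left_mem_Ico.2 hab), indicator_of_notMem left_notMem_Ioc]
  simp

lemma jump_sub_ind_right (hp : IsRealPyramid p) (hab : a < b)
    (h1 : ∀ x ∈ Ico a b, 1 ≤ p x) : jump (fun y => p y - ind a b y) b = jump p b + 1 := by
  rw [hp.jump_sub_ind h1, ind_of_notMem right_notMem_Ico, indicator_of_mem (right_mem_Ioc.2 hab)]
  simp

lemma jump_sub_ind_of_ne (hp : IsRealPyramid p) (h1 : ∀ x ∈ Ico a b, 1 ≤ p x)
    {x : ℝ} (ha : x ≠ a) (hb : x ≠ b) : jump (fun y => p y - ind a b y) x = jump p x := by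
  have hmem : x ∈ Ico a b ↔ x ∈ Ioc a b :=
    ⟨fun h => ⟨lt_of_le_of_ne h.1 ha.symm, h.2.le⟩,
      fun h => ⟨h.1.le, lt_of_le_of_ne h.2 hb⟩⟩
  rw [hp.jump_sub_ind h1]
  by_cases hx : x ∈ Ico a b
  · rw [ind_of_mem hx, indicator_of_mem (hmem.1 hx)]
    simp
  · rw [ind_of_notMem hx, indicator_of_notMem (hmem.not.1 hx)]
    simp

lemma jump_eq_of_removable (hp : IsRealPyramid p) (hab : a < b)
    (hr : Removable p a b) :
    jump p a = (if a ≤ 0 then 1 else 0) ∧ jump p b = (if 0 < b then -1 else 0) := by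
  obtain ⟨h1, hq⟩ := hr
  have hqa := hp.jump_sub_ind_left hab h1
  have hqb := hp.jump_sub_ind_right hab h1
  have := abs_le.1 (hp.abs_jump_le a)
  have := abs_le.1 (hp.abs_jump_le b)
  have := abs_le.1 (hq.abs_jump_le a)
  have := abs_le.1 (hq.abs_jump_le b)
  constructor
  · split_ifs with ha
    · have := hq.jump_nonneg_of_nonpos ha
      omega
    · have := hp.jump_nonpos_of_pos (not_le.1 ha)
      omega
  · split_ifs with hb
    · have := hq.jump_nonpos_of_pos hb
      omega
    · have := hp.jump_nonneg_of_nonpos (not_lt.1 hb)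
      omega

lemma one_le_of_leftLim_lt (hp : IsRealPyramid p)
    (ha : a ≤ 0 → leftLim p a < p a) (hb : 0 < b → p b < leftLim p b) :
    ∀ x ∈ Ico a b, 1 ≤ p x := by
  intro x hx
  rcases le_or_gt x 0 with hx0 | hx0
  · have := ha (hx.1.trans hx0)
    have := hp.monotoneOn (hx.1.trans hx0) hx0 hx.1
    omega
  · have := hb (hx0.trans hx.2)
    have := hp.leftLim_le_of_lt hx0.le hx.2
    omega

lemma sub_ind_le_of_le_of_nonpos (hp : IsRealPyramid p)
    (ha : a ≤ 0 → leftLim p a < p a) {x y : ℝ} (hxy : x ≤ y) (hy : y ≤ 0) :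
    p x - ind a b x ≤ p y - ind a b y := by
  have hpxy := hp.monotoneOn (hxy.trans hy) hy hxy
  by_cases hyJ : y ∈ Ico a b
  · have ha0 := hyJ.1.trans hy
    by_cases hxJ : x ∈ Ico a b
    · rw [ind_of_mem hxJ, ind_of_mem hyJ]
      omega
    · have hxa : x < a := not_le.1 fun hax => hxJ ⟨hax, hxy.trans_lt hyJ.2⟩
      have := hp.le_leftLim_of_lt hxa ha0
      have := ha ha0
      have := hp.monotoneOn ha0 hy hyJ.1
      rw [ind_of_notMem hxJ, ind_of_mem hyJ]
      omega
  · rw [ind_of_notMem hyJ]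
    omega

lemma sub_ind_le_of_nonneg_of_le (hp : IsRealPyramid p)
    (hb : 0 < b → p b < leftLim p b) {x y : ℝ} (hx : 0 ≤ x) (hxy : x ≤ y) :
    p y - ind a b y ≤ p x - ind a b x := by
  have hpxy := hp.antitoneOn hx (hx.trans hxy) hxy
  by_cases hxJ : x ∈ Ico a b
  · have hb0 := hx.trans_lt hxJ.2
    by_cases hyJ : y ∈ Ico a b
    · rw [ind_of_mem hxJ, ind_of_mem hyJ]
      omega
    · have hby : b ≤ y := not_lt.1 fun hyb => hyJ ⟨hxJ.1.trans hxy, hyb⟩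
      have := hp.antitoneOn hb0.le (hb0.le.trans hby) hby
      have := hb hb0
      have := hp.leftLim_le_of_lt hx hxJ.2
      rw [ind_of_notMem hyJ, ind_of_mem hxJ]
      omega
  · rw [ind_of_notMem hxJ]
    omega

lemma removable_of_jump_eq (hp : IsRealPyramid p) (hab : a < b)
    (ha : jump p a = if a ≤ 0 then 1 else 0) (hb : jump p b = if 0 < b then -1 else 0) :
    Removable p a b := by
  have ha_up : a ≤ 0 → leftLim p a < p a := fun h => by
    rw [if_pos h, jump] at ha
    omega
  have hb_down : 0 < b → p b < leftLim p b := fun h => by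
    rw [if_pos h, jump] at hb
    omega
  have h1 := hp.one_le_of_leftLim_lt ha_up hb_down
  have hmono : ∀ x y, x ≤ y → y ≤ 0 → p x - ind a b x ≤ p y - ind a b y :=
    fun _ _ => hp.sub_ind_le_of_le_of_nonpos ha_up
  have hanti : ∀ x y, 0 ≤ x → x ≤ y → p y - ind a b y ≤ p x - ind a b x :=
    fun _ _ => hp.sub_ind_le_of_nonneg_of_le hb_down
  have hjump (x : ℝ) : |jump (fun y => p y - ind a b y) x| ≤ 1 := by
    rcases eq_or_ne x a with rfl | hxa
    · rw [hp.jump_sub_ind_left hab h1, ha, abs_le]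
      split_ifs <;> norm_num
    rcases eq_or_ne x b with rfl | hxb
    · rw [hp.jump_sub_ind_right hab h1, hb, abs_le]
      split_ifs <;> norm_num
    rw [hp.jump_sub_ind_of_ne h1 hxa hxb]
    exact hp.abs_jump_le x
  obtain ⟨⟨M, hM⟩, -, -, -, hrc, hfin, -⟩ := hp
  refine ⟨h1, ⟨M, fun x hx => by simp [hM x hx]⟩,
    fun x => (le_total x 0).elim (fun hx => hmono x 0 hx le_rfl) (fun hx => hanti 0 x le_rfl hx),
    hmono, hanti,
    fun x => (hrc x).sub continuousWithinAt_ind, ?_, hjump⟩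
  refine (hfin.union (toFinite {a, b})).subset fun x hx => ?_
  by_cases hpx : ContinuousAt p x
  · refine Or.inr (by_contra fun hxab => ?_)
    simp only [mem_insert_iff, mem_singleton_iff, not_or] at hxab
    exact hx (hpx.sub (continuousAt_ind hab hxab.1 hxab.2))
  · exact Or.inl hpx

lemma removable_iff_not_continuousAt (hp : IsRealPyramid p) (hab : a < b) :
    Removable p a b ↔ (¬ContinuousAt p a ↔ a ≤ 0) ∧ (¬ContinuousAt p b ↔ 0 < b) := by
  rw [← hp.jump_eq_ite_nonpos_iff, ← hp.jump_eq_ite_pos_iff]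
  exact ⟨hp.jump_eq_of_removable hab, fun h => hp.removable_of_jump_eq hab h.1 h.2⟩

end IsRealPyramid

/-- `p ≥ 1` on `[a,b)` and `p − 1_{[a,b)}` is a real pyramid iff exactly one
of the three listed (mutually exclusive) conditions on the endpoints and the discontinuity
set `D(p) = {x | p is discontinuous at x}` holds. -/
theorem removable_iff (p : ℝ → ℕ) (hp : IsRealPyramid p) (a b : ℝ) (hab : a < b) :
    ((∀ x ∈ Set.Ico a b, 1 ≤ p x) ∧ IsRealPyramid (fun x => p x - ind a b x)) ↔
      ((0 < a ∧ ContinuousAt p a ∧ ¬ ContinuousAt p b) ∨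
       (a ≤ 0 ∧ 0 < b ∧ ¬ ContinuousAt p a ∧ ¬ ContinuousAt p b) ∨
       (b ≤ 0 ∧ ¬ ContinuousAt p a ∧ ContinuousAt p b)) := by
  refine (hp.removable_iff_not_continuousAt hab).trans ?_
  rcases le_or_gt a 0 with ha | ha <;> rcases le_or_gt b 0 with hb | hb
  · simp [ha, hb, not_lt.2 ha, not_lt.2 hb]
  · simp [ha, hb, not_lt.2 ha, not_le.2 hb]
  · exact absurd (hab.trans_le hb) ha.not_gt
  · simp [ha, hb, not_le.2 ha, not_le.2 hb]
end
end

section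
/- For every real interval J, the operators on the Fock space 𝓕 satisfy the Drinfeld–Jimbo commutation relation (v − v⁻¹)·(E_J ∘ F_J − F_J ∘ E_J) = K_J − K_J⁻¹ as K-linear endomorphisms of 𝓕. -/
/-!
On a basis vector `|p⟩`, `E_J F_J |p⟩ = |p⟩` when `J = [a, b)` is addable for `p`, since the
coefficients `t (-v)^{p(a) - p(b)}` and `-t (-v)^{p(b) - p(a) - 1}` multiply to `-t² (-v)⁻¹ = 1`;
likewise `F_J E_J |p⟩ = |p⟩` when `J` is removable, and the composites vanish otherwise. The
relation thus reduces to `J` never being both addable and removable, which holds because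
`p + 1_J` and `p - 1_J` share their left limit at `a` but differ by `2` at `a`: the bounded
jumps and the monotonicity of a pyramid on the side of `0` containing `a` rule this out.
-/
noncomputable section
open Function
open scoped Classical

/-- The base field `K = ℚ(t)`. -/
abbrev K : Type := RatFunc ℚ

/-- The variable `t ∈ K` (playing the role of `υ^{1/2}`). -/
def tK : K := RatFunc.X

/-- The quantum parameter `v := t²`. -/
def vK : K := tK ^ 2

/-- The type of real pyramids. -/
def Pyr : Type := {p : ℝ → ℕ // IsRealPyramid p}

/-- The Fock space: the `K`-vector space with basis `|p⟩` indexed by real pyramids. -/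
abbrev Fock : Type := Pyr →₀ K

/-- `E_J |p⟩ = −t·(−v)^{p(b)−p(a)} |p − 1_J⟩` if `J = [a,b)` is removable for `p`,
and `0` otherwise. -/
def Evec (a b : ℝ) (p : Pyr) : Fock :=
  if h : Removable p.1 a b then
    Finsupp.single ⟨fun x => p.1 x - ind a b x, h.2⟩
      (-tK * (-vK) ^ ((p.1 b : ℤ) - (p.1 a : ℤ)))
  else 0

/-- `F_J |p⟩ = t·(−v)^{p(a)−p(b)} |p + 1_J⟩` if `J = [a,b)` is addable for `p`,
and `0` otherwise. -/
def Fvec (a b : ℝ) (p : Pyr) : Fock :=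
  if h : Addable p.1 a b then
    Finsupp.single ⟨fun x => p.1 x + ind a b x, h⟩
      (tK * (-vK) ^ ((p.1 a : ℤ) - (p.1 b : ℤ)))
  else 0

/-- The `K`-linear operator `E_J` on the Fock space. -/
def Eop (a b : ℝ) : Fock →ₗ[K] Fock :=
  Finsupp.lsum K fun p => LinearMap.toSpanSingleton K Fock (Evec a b p)

/-- The `K`-linear operator `F_J` on the Fock space. -/
def Fop (a b : ℝ) : Fock →ₗ[K] Fock :=
  Finsupp.lsum K fun p => LinearMap.toSpanSingleton K Fock (Fvec a b p)

/-- The `K`-linear operator `K_J` on the Fock space: `K_J |p⟩ = v^{n_J(p)} |p⟩`. -/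
def Kop (a b : ℝ) : Fock →ₗ[K] Fock :=
  Finsupp.lsum K fun p =>
    LinearMap.toSpanSingleton K Fock (Finsupp.single p (vK ^ (nJ p.1 a b)))

/-- The `K`-linear operator `K_J⁻¹` on the Fock space: `K_J⁻¹ |p⟩ = v^{−n_J(p)} |p⟩`. -/
def Kinvop (a b : ℝ) : Fock →ₗ[K] Fock :=
  Finsupp.lsum K fun p =>
    LinearMap.toSpanSingleton K Fock (Finsupp.single p (vK ^ (-nJ p.1 a b)))

open Filter Topology Set

theorem eventually_eq_leftLim_of_finite_discontinuities {β : Type*} [TopologicalSpace β]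
    [DiscreteTopology β] {f : ℝ → β} (hf : {x | ¬ContinuousAt f x}.Finite) (a : ℝ) :
    ∀ᶠ x in 𝓝[<] a, f x = leftLim f a := by
  have hopen : ({x | ¬ContinuousAt f x} \ {a})ᶜ ∈ 𝓝[<] a :=
    nhdsWithin_le_nhds (hf.sdiff.isClosed.isOpen_compl.mem_nhds fun h => h.2 rfl)
  obtain ⟨c, hc : c < a, hsub⟩ := mem_nhdsLT_iff_exists_Ioo_subset.1 hopen
  have hcont : ContinuousOn f (Ioo c a) := fun x hx =>
    (not_not.1 fun h => hsub hx ⟨h, hx.2.ne⟩).continuousWithinAt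
  obtain ⟨y, hy⟩ := nonempty_Ioo.2 hc
  have hconst : ∀ x ∈ Ioo c a, f x = f y := fun x hx =>
    isPreconnected_Ioo.constant hcont hx hy
  have hlim : leftLim f a = f y :=
    leftLim_eq_of_tendsto <| tendsto_const_nhds.congr' <|
      eventually_of_mem (Ioo_mem_nhdsLT hc) fun x hx => (hconst x hx).symm
  filter_upwards [Ioo_mem_nhdsLT hc] with x hx
  rw [hlim, hconst x hx]

theorem ind_of_lt {a b x : ℝ} (hx : x < a) : ind a b x = 0 :=
  indicator_of_notMem (fun h => hx.not_ge h.1) _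

theorem ind_left {a b : ℝ} (hab : a < b) : ind a b a = 1 :=
  indicator_of_mem (left_mem_Ico.2 hab) _

theorem ind_right (a b : ℝ) : ind a b b = 0 :=
  indicator_of_notMem (fun h => h.2.false) _

theorem sub_ind_add_ind {p : ℝ → ℕ} {a b : ℝ} (hp : ∀ x ∈ Ico a b, 1 ≤ p x) (x : ℝ) :
    p x - ind a b x + ind a b x = p x := by
  by_cases hx : x ∈ Ico a b
  · rw [ind, indicator_of_mem hx]
    exact Nat.sub_add_cancel (hp x hx)
  · rw [ind, indicator_of_notMem hx, Nat.sub_zero, Nat.add_zero]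

namespace IsRealPyramid

variable {q r : ℝ → ℕ} {a : ℝ}

theorem eventually_eq_leftLim (hq : IsRealPyramid q) (a : ℝ) :
    ∀ᶠ x in 𝓝[<] a, q x = leftLim q a := by
  obtain ⟨-, -, -, -, -, hfin, -⟩ := hq
  exact eventually_eq_leftLim_of_finite_discontinuities hfin a

theorem leftLim_le_of_nonpos_s11 (hq : IsRealPyramid q) (ha : a ≤ 0) : leftLim q a ≤ q a := by
  obtain ⟨x, hx, hxa : x < a⟩ := ((hq.eventually_eq_leftLim a).and self_mem_nhdsWithin).exists
  obtain ⟨-, -, hmono, -⟩ := hq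
  exact hx ▸ hmono hxa.le ha

theorem le_leftLim_of_pos_s11 (hq : IsRealPyramid q) (ha : 0 < a) : q a ≤ leftLim q a := by
  obtain ⟨x, hx, hxa⟩ := ((hq.eventually_eq_leftLim a).and (Ioo_mem_nhdsLT ha)).exists
  obtain ⟨-, -, -, hanti, -⟩ := hq
  exact hx ▸ hanti hxa.1.le hxa.2.le

theorem leftLim_eq_of_eqOn_Iio (hq : IsRealPyramid q) (hr : IsRealPyramid r)
    (h : EqOn q r (Iio a)) : leftLim q a = leftLim r a := by
  obtain ⟨x, ⟨hqx, hrx⟩, hxa⟩ :=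
    (((hq.eventually_eq_leftLim a).and (hr.eventually_eq_leftLim a)).and
      self_mem_nhdsWithin).exists
  rw [← hqx, ← hrx, h hxa]

/-- A jump of at most one on each side forces `q a - 1 = L = r a + 1` for the common left limit
`L`; then `r` jumps down at `a ≤ 0` or `q` jumps up at `0 < a`. -/
theorem ne_add_two_of_eqOn_Iio (hq : IsRealPyramid q) (hr : IsRealPyramid r)
    (h : EqOn q r (Iio a)) : q a ≠ r a + 2 := by
  intro hqr
  have hL := hq.leftLim_eq_of_eqOn_Iio hr h
  have hside : leftLim r a ≤ r a ∨ q a ≤ leftLim q a :=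
    (le_or_gt a 0).imp hr.leftLim_le_of_nonpos_s11 hq.le_leftLim_of_pos_s11
  obtain ⟨-, -, -, -, -, -, hjq⟩ := hq
  obtain ⟨-, -, -, -, -, -, hjr⟩ := hr
  have := abs_le.1 (hjq a)
  have := abs_le.1 (hjr a)
  omega

end IsRealPyramid

theorem not_addable_of_removable {p : ℝ → ℕ} {a b : ℝ} (hab : a < b) (hR : Removable p a b) :
    ¬Addable p a b := fun hA =>
  IsRealPyramid.ne_add_two_of_eqOn_Iio hA hR.2
    (fun x (hx : x < a) => show p x + _ = p x - _ by rw [ind_of_lt hx]; rfl) <| by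
    have := hR.1 a (left_mem_Ico.2 hab)
    show p a + _ = p a - _ + 2
    rw [ind_left hab]
    omega

theorem removable_of_eq_add_ind {p q : ℝ → ℕ} {a b : ℝ} (hp : IsRealPyramid p)
    (hq : ∀ x, q x = p x + ind a b x) : Removable q a b := by
  refine ⟨fun x hx => ?_, ?_⟩
  · rw [hq, ind, indicator_of_mem hx]
    exact le_add_self
  · simpa only [hq, Nat.add_sub_cancel] using hp

theorem addable_of_eq_sub_ind {p q : ℝ → ℕ} {a b : ℝ} (hp : IsRealPyramid p)
    (hp₁ : ∀ x ∈ Ico a b, 1 ≤ p x) (hq : ∀ x, q x = p x - ind a b x) : Addable q a b := by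
  simpa only [Addable, hq, sub_ind_add_ind hp₁] using hp

theorem tK_mul_neg_tK {m n : ℤ} (h : m + n = -1) :
    tK * (-vK) ^ m * (-tK * (-vK) ^ n) = 1 := by
  have hv : -vK ≠ 0 := neg_ne_zero.2 (pow_ne_zero 2 RatFunc.X_ne_zero)
  calc tK * (-vK) ^ m * (-tK * (-vK) ^ n) = -vK * (-vK) ^ (m + n) := by
        rw [zpow_add₀ hv, vK]; ring
    _ = 1 := by rw [h, zpow_neg_one, mul_inv_cancel₀ hv]

section Operators

variable (a b : ℝ)

theorem Eop_single (p : Pyr) (c : K) : Eop a b (Finsupp.single p c) = c • Evec a b p := by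
  simp [Eop]

theorem Fop_single (p : Pyr) (c : K) : Fop a b (Finsupp.single p c) = c • Fvec a b p := by
  simp [Fop]

theorem Kop_single_one (p : Pyr) :
    Kop a b (Finsupp.single p 1) = Finsupp.single p (vK ^ nJ p.1 a b) := by
  simp [Kop]

theorem Kinvop_single_one (p : Pyr) :
    Kinvop a b (Finsupp.single p 1) = Finsupp.single p (vK ^ (-nJ p.1 a b)) := by
  simp [Kinvop]

variable {a b}

theorem Evec_of_removable {p q : Pyr} (hR : Removable p.1 a b)
    (hq : ∀ x, q.1 x = p.1 x - ind a b x) :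
    Evec a b p = Finsupp.single q (-tK * (-vK) ^ ((p.1 b : ℤ) - p.1 a)) := by
  unfold Evec
  rw [dif_pos hR]
  congr
  exact funext fun x => (hq x).symm

theorem Fvec_of_addable {p q : Pyr} (hA : Addable p.1 a b)
    (hq : ∀ x, q.1 x = p.1 x + ind a b x) :
    Fvec a b p = Finsupp.single q (tK * (-vK) ^ ((p.1 a : ℤ) - p.1 b)) := by
  unfold Fvec
  rw [dif_pos hA]
  congr
  exact funext fun x => (hq x).symm

theorem Evec_of_not_removable {p : Pyr} (hR : ¬Removable p.1 a b) : Evec a b p = 0 :=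
  dif_neg hR

theorem Fvec_of_not_addable {p : Pyr} (hA : ¬Addable p.1 a b) : Fvec a b p = 0 :=
  dif_neg hA

theorem Eop_Fvec_of_addable (hab : a < b) {p : Pyr} (hA : Addable p.1 a b) :
    Eop a b (Fvec a b p) = Finsupp.single p 1 := by
  obtain ⟨q, hq⟩ : ∃ q : Pyr, ∀ x, q.1 x = p.1 x + ind a b x := ⟨⟨_, hA⟩, fun _ => rfl⟩
  have hp : ∀ x, p.1 x = q.1 x - ind a b x := fun x => by rw [hq, Nat.add_sub_cancel]
  rw [Fvec_of_addable hA hq, Eop_single, Evec_of_removable (removable_of_eq_add_ind p.2 hq) hp,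
    Finsupp.smul_single, smul_eq_mul, hq, hq, ind_left hab, ind_right]
  exact congrArg _ (tK_mul_neg_tK (by push_cast; ring))

theorem Fop_Evec_of_removable (hab : a < b) {p : Pyr} (hR : Removable p.1 a b) :
    Fop a b (Evec a b p) = Finsupp.single p 1 := by
  obtain ⟨q, hq⟩ : ∃ q : Pyr, ∀ x, q.1 x = p.1 x - ind a b x := ⟨⟨_, hR.2⟩, fun _ => rfl⟩
  have hp : ∀ x, p.1 x = q.1 x + ind a b x := fun x => by rw [hq, sub_ind_add_ind hR.1]
  have hpa := hR.1 a (left_mem_Ico.2 hab)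
  rw [Evec_of_removable hR hq, Fop_single,
    Fvec_of_addable (addable_of_eq_sub_ind p.2 hR.1 hq) hp, Finsupp.smul_single, smul_eq_mul,
    hq, hq, ind_left hab, ind_right, mul_comm]
  exact congrArg _ (tK_mul_neg_tK (by omega))

theorem smul_Eop_Fvec_sub_Fop_Evec (hab : a < b) (p : Pyr) :
    (vK - vK⁻¹) • (Eop a b (Fvec a b p) - Fop a b (Evec a b p)) =
      Finsupp.single p (vK ^ nJ p.1 a b) - Finsupp.single p (vK ^ (-nJ p.1 a b)) := by
  by_cases hA : Addable p.1 a b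
  · rw [Eop_Fvec_of_addable hab hA,
      Evec_of_not_removable fun hR => not_addable_of_removable hab hR hA, map_zero, sub_zero,
      nJ, if_pos hA, Finsupp.smul_single_one, zpow_one, zpow_neg_one, Finsupp.single_sub]
  by_cases hR : Removable p.1 a b
  · rw [Fop_Evec_of_removable hab hR, Fvec_of_not_addable hA, map_zero, zero_sub, smul_neg,
      nJ, if_neg hA, if_pos hR, Finsupp.smul_single_one, neg_neg, zpow_one, zpow_neg_one,
      Finsupp.single_sub, neg_sub]
  · rw [Evec_of_not_removable hR, Fvec_of_not_addable hA, nJ, if_neg hA, if_neg hR, map_zero,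
      map_zero, sub_zero, smul_zero, neg_zero, sub_self]

end Operators

/-- the Drinfeld–Jimbo relation
`(v − v⁻¹)·(E_J ∘ F_J − F_J ∘ E_J) = K_J − K_J⁻¹` holds on the Fock space. -/
theorem fock_EF_commutator (a b : ℝ) (hab : a < b) :
    (vK - vK⁻¹) • (Eop a b ∘ₗ Fop a b - Fop a b ∘ₗ Eop a b) = Kop a b - Kinvop a b := by
  refine Finsupp.lhom_ext' fun p => LinearMap.ext_ring ?_
  simp only [LinearMap.comp_apply, Finsupp.lsingle_apply, LinearMap.smul_apply,
    LinearMap.sub_apply, Eop_single, Fop_single, Kop_single_one, Kinvop_single_one, one_smul]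
  exact smul_Eop_Fvec_sub_Fop_Evec hab p
end
end
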